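/- arXiv:1610.04809 — 3 statements merged into one kernel-verified Lean document; each statement's English description precedes it below -/
import Mathlib

section
/- Let γ > 2, and let φ be nonnegative, increasing, differentiable, and concave on [0,∞). Define for x_t ≥ x₀ > 0 and a fixed constant K > 0: F(x_t) = φ(K·x_t/√(I(x_t)))·x_t^{1-γ}/(γ-1) + λ·K·√(I(x_t)) where I(x_t) = ∫_{x_t}^∞ x^{1-γ} dx = x_t^{2-γ}/(γ-2) and λ > 0. Then F'(x_t) ≤ 0 for all x_t ≥ x₀. -/
/-!
Substituting `I(x) = x^(2-γ)/(γ-2)` turns the revenue into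
`φ(c x^(γ/2)) x^(1-γ)/(γ-1) + d x^(1-γ/2)` with `c, d ≥ 0`. The second term decreases since
`γ > 2`. For the first, with `u = c x^(γ/2)` its derivative is
`(γ/2 · u φ'(u) + (1-γ) φ(u)) x^(-γ)/(γ-1)`, and concavity with `φ(0) ≥ 0` gives `u φ'(u) ≤ φ(u)`,
so the bracket is at most `(1 - γ/2) φ(u) ≤ 0`.
-/

open Set

theorem ConcaveOn.mul_deriv_le_sub {φ : ℝ → ℝ} (hconc : ConcaveOn ℝ (Ici 0) φ) {u : ℝ}
    (hu : 0 < u) (hd : DifferentiableAt ℝ φ u) : u * deriv φ u ≤ φ u - φ 0 := by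
  have hslope : deriv φ u ≤ slope φ 0 u :=
    hconc.deriv_le_slope self_mem_Ici (mem_Ici.2 hu.le) hu hd
  rw [slope_def_field, sub_zero, le_div_iff₀ hu] at hslope
  linarith

theorem Real.sqrt_rpow_div {x : ℝ} (hx : 0 ≤ x) (a b : ℝ) :
    √(x ^ a / b) = x ^ (a / 2) / √b := by
  rw [Real.sqrt_div (Real.rpow_nonneg hx a), Real.sqrt_eq_rpow, ← Real.rpow_mul hx]
  ring_nf

theorem hasDerivAt_comp_const_mul_rpow_mul_rpow {φ : ℝ → ℝ} {c p r x : ℝ} (hx : 0 < x)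
    (hφ : DifferentiableAt ℝ φ (c * x ^ p)) :
    HasDerivAt (fun y => φ (c * y ^ p) * y ^ r)
      ((p * (c * x ^ p * deriv φ (c * x ^ p)) + r * φ (c * x ^ p)) * x ^ (r - 1)) x := by
  have hinner : HasDerivAt (fun y => c * y ^ p) (c * (p * x ^ (p - 1))) x :=
    (Real.hasDerivAt_rpow_const (Or.inl hx.ne')).const_mul c
  have hshift : x ^ (p - 1) * x ^ r = x ^ p * x ^ (r - 1) := by
    rw [← Real.rpow_add hx, ← Real.rpow_add hx]
    ring_nf
  refine ((hφ.hasDerivAt.comp x hinner).mul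
    (Real.hasDerivAt_rpow_const (p := r) (Or.inl hx.ne'))).congr_deriv ?_
  rw [Function.comp_apply]
  linear_combination deriv φ (c * x ^ p) * c * p * hshift

theorem revenue_eventuallyEq {γ K lam x : ℝ} (φ : ℝ → ℝ) (hx : 0 < x) :
    (fun y : ℝ =>
        φ (K * y / Real.sqrt (y ^ (2 - γ) / (γ - 2))) * y ^ (1 - γ) / (γ - 1) +
          lam * K * Real.sqrt (y ^ (2 - γ) / (γ - 2)))
      =ᶠ[nhds x] fun y =>
        φ (K * √(γ - 2) * y ^ (γ / 2)) * y ^ (1 - γ) / (γ - 1) +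
          lam * K / √(γ - 2) * y ^ (1 - γ / 2) := by
  filter_upwards [eventually_gt_nhds hx] with y hy
  have hsqrt : √(y ^ (2 - γ) / (γ - 2)) = y ^ (1 - γ / 2) / √(γ - 2) := by
    rw [Real.sqrt_rpow_div hy.le]
    ring_nf
  have hsplit : y ^ (γ / 2) * y ^ (1 - γ / 2) = y := by
    rw [← Real.rpow_add hy]
    norm_num
  have harg : K * y / (y ^ (1 - γ / 2) / √(γ - 2)) = K * √(γ - 2) * y ^ (γ / 2) := by
    rw [div_div_eq_mul_div, div_eq_iff (Real.rpow_pos_of_pos hy _).ne']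
    linear_combination (-K * √(γ - 2)) * hsplit
  rw [hsqrt, harg]
  ring

theorem stmt_8_general (γ lam K x₀ : ℝ) (φ : ℝ → ℝ)
    (hγ : 2 < γ) (hlam : 0 < lam) (hK : 0 < K) (hx₀ : 0 < x₀)
    (hφ0 : ∀ x ∈ Ici (0 : ℝ), 0 ≤ φ x)
    (hdiff : Differentiable ℝ φ)
    (hconc : ConcaveOn ℝ (Ici 0) φ) :
    ∀ xt : ℝ, x₀ ≤ xt →
      deriv (fun x : ℝ =>
        φ (K * x / Real.sqrt (x ^ (2 - γ) / (γ - 2))) * x ^ (1 - γ) / (γ - 1) +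
          lam * K * Real.sqrt (x ^ (2 - γ) / (γ - 2))) xt ≤ 0 := by
  intro xt hxt
  have hx : 0 < xt := hx₀.trans_le hxt
  set u := K * √(γ - 2) * xt ^ (γ / 2)
  have hu : 0 < u := by
    have : 0 < √(γ - 2) := Real.sqrt_pos.2 (by linarith)
    positivity
  have hF := (((hasDerivAt_comp_const_mul_rpow_mul_rpow (r := 1 - γ) hx
    (hdiff u)).div_const (γ - 1)).add ((Real.hasDerivAt_rpow_const
    (p := 1 - γ / 2) (Or.inl hx.ne')).const_mul (lam * K / √(γ - 2)))).congr_of_eventuallyEq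
    (revenue_eventuallyEq φ hx)
  rw [hF.deriv]
  have hconcave : u * deriv φ u ≤ φ u := by
    linarith [hconc.mul_deriv_le_sub hu (hdiff u), hφ0 0 self_mem_Ici]
  have hbracket : γ / 2 * (u * deriv φ u) + (1 - γ) * φ u ≤ 0 := by
    nlinarith [hφ0 u hu.le]
  have hfirst : (γ / 2 * (u * deriv φ u) + (1 - γ) * φ u) * xt ^ (1 - γ - 1) / (γ - 1) ≤ 0 :=
    div_nonpos_of_nonpos_of_nonneg
      (mul_nonpos_of_nonpos_of_nonneg hbracket (Real.rpow_pos_of_pos hx _).le) (by linarith)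
  have hsecond : lam * K / √(γ - 2) * ((1 - γ / 2) * xt ^ (1 - γ / 2 - 1)) ≤ 0 :=
    mul_nonpos_of_nonneg_of_nonpos (by positivity)
      (mul_nonpos_of_nonpos_of_nonneg (by linarith) (Real.rpow_pos_of_pos hx _).le)
  linarith

theorem stmt_8 (γ lam K x₀ : ℝ) (φ : ℝ → ℝ)
    (hγ : 2 < γ) (hlam : 0 < lam) (hK : 0 < K) (hx₀ : 0 < x₀)
    (hφ0 : ∀ x ∈ Ici (0 : ℝ), 0 ≤ φ x)
    (hmono : MonotoneOn φ (Ici 0))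
    (hdiff : Differentiable ℝ φ)
    (hconc : ConcaveOn ℝ (Ici 0) φ) :
    ∀ xt : ℝ, x₀ ≤ xt →
      deriv (fun x : ℝ =>
        φ (K * x / Real.sqrt (x ^ (2 - γ) / (γ - 2))) * x ^ (1 - γ) / (γ - 1) +
          lam * K * Real.sqrt (x ^ (2 - γ) / (γ - 2))) xt ≤ 0 :=
  stmt_8_general γ lam K x₀ φ hγ hlam hK hx₀ hφ0 hdiff hconc
end

section
/- Let γ > 2 and φ nonnegative, increasing, differentiable, concave on [0,∞) with x·φ'(x) ≤ φ(x) for x ≥ 0. For constants K, λ > 0, define S(x_t) = ∫_{x_t}^∞ φ(K·x/√(I(x_t)))·x^{-γ} dx + λK·√(I(x_t)), where I(x_t) = x_t^{2-γ}/(γ-2). Then S'(x_t) ≤ 0 for all x_t ≥ x₀ > 0; in particular the social welfare is maximized by setting the consumer cutoff equal to x₀. -/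
/-! Substituting `x = t * s` in the integral turns the welfare into
`S t = (γ - 2) K σ(t) ∫_{s > 1} ψ (K t s / σ(t)) s^(1-γ) ds + λ K σ(t)`, where `σ = √I` and
`ψ y = φ y / y`. Here `σ` is decreasing, `t / σ(t)` is increasing, and `ψ` is decreasing because
`φ` is concave with `φ 0 ≥ 0`; all factors are nonnegative, so `S` is decreasing on `(0, ∞)`
and its derivative is nonpositive there (Lean's `deriv` is `0` wherever `S` is not
differentiable). -/

open MeasureTheory Set

lemma ConcaveOn.antitoneOn_div_self {φ : ℝ → ℝ} (hφ : ConcaveOn ℝ (Ici 0) φ) (h0 : 0 ≤ φ 0) :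
    AntitoneOn (fun y => φ y / y) (Ioi 0) := by
  intro y (hy : 0 < y) z (hz : 0 < z) hyz
  have hslope := hφ.antitoneOn_slope_gt self_mem_Ici ⟨mem_Ici.2 hy.le, hy⟩
    ⟨mem_Ici.2 hz.le, hz⟩ hyz
  simp only [slope_def_field, sub_zero] at hslope
  rw [div_le_div_iff₀ hz hy] at hslope ⊢
  nlinarith [mul_nonneg h0 (sub_nonneg.2 hyz)]

section ScaledIntegral

variable {ψ : ℝ → ℝ} {p : ℝ}

lemma integrableOn_Ioi_one_comp_mul_mul_rpow (hp : p < -1) (hψc : ContinuousOn ψ (Ioi 0))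
    (hψa : AntitoneOn ψ (Ioi 0)) (hψ0 : ∀ y ∈ Ioi 0, 0 ≤ ψ y) {μ : ℝ} (hμ : 0 < μ) :
    IntegrableOn (fun s => ψ (μ * s) * s ^ p) (Ioi 1) := by
  have hmeas : AEStronglyMeasurable (fun s => ψ (μ * s) * s ^ p) (volume.restrict (Ioi 1)) := by
    refine ContinuousOn.aestronglyMeasurable ?_ measurableSet_Ioi
    refine (hψc.comp (continuousOn_const.mul continuousOn_id) ?_).mul ?_
    · exact fun s (hs : 1 < s) => mul_pos hμ (one_pos.trans hs)
    · exact fun s (hs : 1 < s) =>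
        (Real.continuousAt_rpow_const s p (Or.inl (one_pos.trans hs).ne')).continuousWithinAt
  refine ((integrableOn_Ioi_rpow_of_lt hp one_pos).const_mul (ψ μ)).mono' hmeas ?_
  filter_upwards [ae_restrict_mem measurableSet_Ioi] with s (hs : 1 < s)
  have hs0 : 0 < s := one_pos.trans hs
  have hμs : 0 < μ * s := mul_pos hμ hs0
  rw [Real.norm_eq_abs, abs_of_nonneg (mul_nonneg (hψ0 _ hμs) (Real.rpow_nonneg hs0.le _))]
  gcongr
  exact hψa hμ hμs (le_mul_of_one_le_right hμ.le hs.le)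

lemma antitoneOn_integral_Ioi_one_comp_mul_mul_rpow (hp : p < -1)
    (hψc : ContinuousOn ψ (Ioi 0)) (hψa : AntitoneOn ψ (Ioi 0)) (hψ0 : ∀ y ∈ Ioi 0, 0 ≤ ψ y) :
    AntitoneOn (fun μ => ∫ s in Ioi 1, ψ (μ * s) * s ^ p) (Ioi 0) := by
  intro μ (hμ : 0 < μ) ν (hν : 0 < ν) hμν
  refine setIntegral_mono_on (integrableOn_Ioi_one_comp_mul_mul_rpow hp hψc hψa hψ0 hν)
    (integrableOn_Ioi_one_comp_mul_mul_rpow hp hψc hψa hψ0 hμ) measurableSet_Ioi ?_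
  intro s (hs : 1 < s)
  have hs0 : 0 < s := one_pos.trans hs
  gcongr
  exact hψa (mul_pos hμ hs0) (mul_pos hν hs0) (by gcongr)

lemma integral_Ioi_one_comp_mul_mul_rpow_nonneg (hψ0 : ∀ y ∈ Ioi 0, 0 ≤ ψ y) {μ : ℝ}
    (hμ : 0 < μ) : 0 ≤ ∫ s in Ioi 1, ψ (μ * s) * s ^ p :=
  setIntegral_nonneg measurableSet_Ioi fun s (hs : 1 < s) =>
    mul_nonneg (hψ0 _ (mul_pos hμ (one_pos.trans hs))) (Real.rpow_nonneg (one_pos.trans hs).le _)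

end ScaledIntegral

lemma integral_Ioi_comp_mul_mul_rpow_neg (φ : ℝ → ℝ) (γ : ℝ) {a t : ℝ} (ha : 0 < a)
    (ht : 0 < t) :
    ∫ x in Ioi t, φ (a * x) * x ^ (-γ) =
      a * t ^ (2 - γ) * ∫ s in Ioi 1, φ (a * t * s) / (a * t * s) * s ^ (1 - γ) := by
  have hsub := integral_comp_mul_left_Ioi (fun x => φ (a * x) * x ^ (-γ)) 1 ht
  rw [mul_one, smul_eq_mul] at hsub
  rw [← integral_const_mul, ← mul_inv_cancel_left₀ ht.ne' (∫ x in Ioi t, _), ← hsub,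
    ← integral_const_mul]
  refine setIntegral_congr_fun measurableSet_Ioi fun s (hs : 1 < s) => ?_
  have hs0 : 0 < s := one_pos.trans hs
  rw [Real.mul_rpow ht.le hs0.le, show 2 - γ = 2 + -γ by ring, show 1 - γ = 1 + -γ by ring,
    Real.rpow_add ht, Real.rpow_add hs0, Real.rpow_two, Real.rpow_one, ← mul_assoc a t s]
  field_simp

/-- The paper's `I(x_t) = ∫_{x_t}^∞ x^(1-γ) dx`. -/
noncomputable def tailMoment (γ t : ℝ) : ℝ := t ^ (2 - γ) / (γ - 2)

noncomputable def welfare (γ lam K : ℝ) (φ : ℝ → ℝ) (t : ℝ) : ℝ :=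
  (∫ x in Ioi t, φ (K * x / Real.sqrt (tailMoment γ t)) * x ^ (-γ)) +
    lam * K * Real.sqrt (tailMoment γ t)

lemma welfare_eq {γ lam K : ℝ} (φ : ℝ → ℝ) (hγ : 2 < γ) (hK : 0 < K) {t : ℝ} (ht : 0 < t) :
    welfare γ lam K φ t =
      (γ - 2) * K * Real.sqrt (tailMoment γ t) *
          (∫ s in Ioi 1, φ (K / Real.sqrt (tailMoment γ t) * t * s) /
            (K / Real.sqrt (tailMoment γ t) * t * s) * s ^ (1 - γ)) +
        lam * K * Real.sqrt (tailMoment γ t) := by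
  have hγ2 : 0 < γ - 2 := sub_pos.2 hγ
  have hI : 0 < tailMoment γ t := div_pos (Real.rpow_pos_of_pos ht _) hγ2
  have hσ : 0 < Real.sqrt (tailMoment γ t) := Real.sqrt_pos.2 hI
  have hpow : t ^ (2 - γ) = (γ - 2) * Real.sqrt (tailMoment γ t) ^ 2 := by
    rw [Real.sq_sqrt hI.le, tailMoment, mul_div_cancel₀ _ hγ2.ne']
  simp only [welfare, mul_div_right_comm K]
  rw [integral_Ioi_comp_mul_mul_rpow_neg φ γ (div_pos hK hσ) ht, hpow]
  field_simp

lemma antitoneOn_welfare {γ lam K : ℝ} {φ : ℝ → ℝ} (hγ : 2 < γ) (hlam : 0 ≤ lam) (hK : 0 < K)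
    (hφ0 : ∀ x ∈ Ici (0 : ℝ), 0 ≤ φ x) (hconc : ConcaveOn ℝ (Ici 0) φ) :
    AntitoneOn (welfare γ lam K φ) (Ioi 0) := by
  have hψ0 : ∀ y ∈ Ioi (0 : ℝ), 0 ≤ φ y / y := fun y (hy : 0 < y) =>
    div_nonneg (hφ0 y (mem_Ici.2 hy.le)) hy.le
  have hψc : ContinuousOn (fun y => φ y / y) (Ioi 0) := by
    refine (hconc.continuousOn_interior.mono ?_).div continuousOn_id fun y hy => ne_of_gt hy
    rw [interior_Ici]
  have hJ := antitoneOn_integral_Ioi_one_comp_mul_mul_rpow (by linarith : 1 - γ < -1) hψc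
    (hconc.antitoneOn_div_self (hφ0 0 self_mem_Ici)) hψ0
  intro t (ht : 0 < t) u (hu : 0 < u) htu
  have hγ2 : 0 < γ - 2 := sub_pos.2 hγ
  have hσ : ∀ {v : ℝ}, 0 < v → 0 < Real.sqrt (tailMoment γ v) := fun hv =>
    Real.sqrt_pos.2 (div_pos (Real.rpow_pos_of_pos hv _) hγ2)
  have hσut : Real.sqrt (tailMoment γ u) ≤ Real.sqrt (tailMoment γ t) := by
    unfold tailMoment
    gcongr √(?_ / _)
    exact Real.rpow_le_rpow_of_nonpos ht htu (by linarith)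
  have hμ : 0 < K / Real.sqrt (tailMoment γ t) * t := mul_pos (div_pos hK (hσ ht)) ht
  have hμtu : K / Real.sqrt (tailMoment γ t) * t ≤ K / Real.sqrt (tailMoment γ u) * u := by
    have hσu := hσ hu
    gcongr
  have hJtu := hJ hμ (hμ.trans_le hμtu) hμtu
  have hJ0 := integral_Ioi_one_comp_mul_mul_rpow_nonneg (p := 1 - γ) hψ0 (hμ.trans_le hμtu)
  simp only at hJtu hJ0
  rw [welfare_eq φ hγ hK ht, welfare_eq φ hγ hK hu]
  gcongr

theorem stmt_9_general (γ lam K x₀ : ℝ) (φ : ℝ → ℝ)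
    (hγ : 2 < γ) (hlam : 0 < lam) (hK : 0 < K) (hx₀ : 0 < x₀)
    (hφ0 : ∀ x ∈ Ici (0 : ℝ), 0 ≤ φ x)
    (hconc : ConcaveOn ℝ (Ici 0) φ) :
    ∀ xt : ℝ, x₀ ≤ xt →
      deriv (fun x_t : ℝ =>
        (∫ x in Ioi x_t,
          φ (K * x / Real.sqrt (x_t ^ (2 - γ) / (γ - 2))) * x ^ (-γ)) +
          lam * K * Real.sqrt (x_t ^ (2 - γ) / (γ - 2))) xt ≤ 0 := by
  intro xt hxt
  rw [← derivWithin_of_mem_nhds (Ioi_mem_nhds (hx₀.trans_le hxt))]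
  exact (antitoneOn_welfare hγ hlam.le hK hφ0 hconc).derivWithin_nonpos

theorem stmt_9 (γ lam K x₀ : ℝ) (φ : ℝ → ℝ)
    (hγ : 2 < γ) (hlam : 0 < lam) (hK : 0 < K) (hx₀ : 0 < x₀)
    (hφ0 : ∀ x ∈ Ici (0 : ℝ), 0 ≤ φ x)
    (hmono : MonotoneOn φ (Ici 0))
    (hdiff : Differentiable ℝ φ)
    (hconc : ConcaveOn ℝ (Ici 0) φ)
    (hsub : ∀ x : ℝ, 0 ≤ x → x * deriv φ x ≤ φ x) :
    ∀ xt : ℝ, x₀ ≤ xt →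
      deriv (fun x_t : ℝ =>
        (∫ x in Ioi x_t,
          φ (K * x / Real.sqrt (x_t ^ (2 - γ) / (γ - 2))) * x ^ (-γ)) +
          lam * K * Real.sqrt (x_t ^ (2 - γ) / (γ - 2))) xt ≤ 0 :=
  stmt_9_general γ lam K x₀ φ hγ hlam hK hx₀ hφ0 hconc
end

section
/- Suppose γ, β > 2, 0 < θ < 1, φ(x) = x^θ, and constants X̄, Ȳ, λ, x₀ > 0. Define for y ≥ y₀: g(y) = (1/2)·((γ-2)/(γ-1)·φ'(√(Ȳ·J(y))·x₀) + λ)·X̄√Ȳ/√(J(y)) and h(y) = (1/2)·(∫_{x₀}^∞ φ'(x·√(Ȳ·J(y)))·x^{1-γ}dx + λX̄)·√Ȳ/√(J(y)), with J(y) = y^{2-β}/(β-2). Then h(y) > g(y) for every y ≥ y₀. -/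
/-!
Writing `Z = √(Ȳ J(y))`, both sides share the term `λ X̄ √Ȳ / √J(y)`, so it suffices to compare
`∫_{x₀}^∞ θ (x Z)^(θ-1) x^(1-γ) dx = θ Z^(θ-1) x₀^(θ-γ+1) / (γ-1-θ)` with
`(γ-2)/(γ-1) · θ (Z x₀)^(θ-1) · X̄ = θ Z^(θ-1) x₀^(θ-γ+1) / (γ-1)`; the first is larger as `θ > 0`.
-/

open MeasureTheory Set

theorem integral_Ioi_mul_rpow_mul_rpow {a c p q : ℝ} (ha : 0 < a) (hc : 0 ≤ c)
    (hpq : p + q < -1) :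
    ∫ x in Ioi a, (x * c) ^ p * x ^ q = -(c ^ p * a ^ (p + q + 1) / (p + q + 1)) := by
  have hsplit : ∀ x ∈ Ioi a, (x * c) ^ p * x ^ q = c ^ p * x ^ (p + q) := by
    intro x hx
    have hx0 : 0 < x := ha.trans hx
    rw [Real.mul_rpow hx0.le hc, Real.rpow_add hx0]
    ring
  rw [setIntegral_congr_fun measurableSet_Ioi hsplit, integral_const_mul,
    integral_Ioi_rpow_of_lt hpq ha]
  ring

theorem mul_deriv_rpow_lt_integral_Ioi {γ θ x₀ Z : ℝ} (hγ : 2 < γ) (hθ0 : 0 < θ)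
    (hθγ : θ < γ - 1) (hx₀ : 0 < x₀) (hZ : 0 < Z) :
    (γ - 2) / (γ - 1) * (θ * (Z * x₀) ^ (θ - 1)) * (x₀ ^ (2 - γ) / (γ - 2)) <
      ∫ x in Ioi x₀, θ * (x * Z) ^ (θ - 1) * x ^ (1 - γ) := by
  have hint : ∫ x in Ioi x₀, θ * (x * Z) ^ (θ - 1) * x ^ (1 - γ) =
      θ * Z ^ (θ - 1) * (x₀ ^ (θ - γ + 1) / (γ - 1 - θ)) := by
    simp_rw [mul_assoc θ]
    rw [integral_const_mul, integral_Ioi_mul_rpow_mul_rpow hx₀ hZ.le (by linarith)]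
    rw [show θ - 1 + (1 - γ) + 1 = θ - γ + 1 by ring, show γ - 1 - θ = -(θ - γ + 1) by ring,
      div_neg]
    ring
  have hlhs : (γ - 2) / (γ - 1) * (θ * (Z * x₀) ^ (θ - 1)) * (x₀ ^ (2 - γ) / (γ - 2)) =
      θ * Z ^ (θ - 1) * (x₀ ^ (θ - γ + 1) / (γ - 1)) := by
    rw [Real.mul_rpow hZ.le hx₀.le, show θ - γ + 1 = (θ - 1) + (2 - γ) by ring,
      Real.rpow_add hx₀]
    field_simp [show γ - 2 ≠ 0 by linarith]
  rw [hint, hlhs]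
  refine mul_lt_mul_of_pos_left ?_ (mul_pos hθ0 (Real.rpow_pos_of_pos hZ _))
  exact div_lt_div_of_pos_left (Real.rpow_pos_of_pos hx₀ _) (by linarith) (by linarith)

theorem stmt_12_general (γ β θ lam x₀ y₀ Xbar Ybar : ℝ)
    (hγ : 2 < γ) (hβ : 2 < β) (hθ0 : 0 < θ) (hθ1 : θ < 1)
    (hx₀ : 0 < x₀) (hy₀ : 0 < y₀) (hY : 0 < Ybar)
    (hX : Xbar = x₀ ^ (2 - γ) / (γ - 2)) :
    ∀ y : ℝ, y₀ ≤ y →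
      (1 / 2) * ((γ - 2) / (γ - 1) *
            (θ * (Real.sqrt (Ybar * (y ^ (2 - β) / (β - 2))) * x₀) ^ (θ - 1)) + lam) *
          Xbar * Real.sqrt Ybar / Real.sqrt (y ^ (2 - β) / (β - 2)) <
      (1 / 2) * ((∫ x in Ioi x₀,
            θ * (x * Real.sqrt (Ybar * (y ^ (2 - β) / (β - 2)))) ^ (θ - 1) *
              x ^ (1 - γ)) + lam * Xbar) *
          Real.sqrt Ybar / Real.sqrt (y ^ (2 - β) / (β - 2)) := by
  intro y hy
  set J := y ^ (2 - β) / (β - 2)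
  have hJ : 0 < J := div_pos (Real.rpow_pos_of_pos (hy₀.trans_le hy) _) (by linarith)
  have hZ : 0 < Real.sqrt (Ybar * J) := Real.sqrt_pos.mpr (mul_pos hY hJ)
  have key := mul_deriv_rpow_lt_integral_Ioi hγ hθ0 (by linarith) hx₀ hZ
  rw [← hX] at key
  calc _ = 1 / 2 * ((γ - 2) / (γ - 1) * (θ * (Real.sqrt (Ybar * J) * x₀) ^ (θ - 1)) * Xbar
          + lam * Xbar) * Real.sqrt Ybar / Real.sqrt J := by ring
    _ < _ := by gcongr

theorem stmt_12 (γ β θ lam x₀ y₀ Xbar Ybar : ℝ)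
    (hγ : 2 < γ) (hβ : 2 < β) (hθ0 : 0 < θ) (hθ1 : θ < 1)
    (hlam : 0 < lam) (hx₀ : 0 < x₀) (hy₀ : 0 < y₀) (hY : 0 < Ybar)
    (hX : Xbar = x₀ ^ (2 - γ) / (γ - 2)) :
    ∀ y : ℝ, y₀ ≤ y →
      (1 / 2) * ((γ - 2) / (γ - 1) *
            (θ * (Real.sqrt (Ybar * (y ^ (2 - β) / (β - 2))) * x₀) ^ (θ - 1)) + lam) *
          Xbar * Real.sqrt Ybar / Real.sqrt (y ^ (2 - β) / (β - 2)) <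
      (1 / 2) * ((∫ x in Ioi x₀,
            θ * (x * Real.sqrt (Ybar * (y ^ (2 - β) / (β - 2)))) ^ (θ - 1) *
              x ^ (1 - γ)) + lam * Xbar) *
          Real.sqrt Ybar / Real.sqrt (y ^ (2 - β) / (β - 2)) :=
  stmt_12_general γ β θ lam x₀ y₀ Xbar Ybar hγ hβ hθ0 hθ1 hx₀ hy₀ hY hX
end
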